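/- arXiv:1610.04415 — 11 statements merged into one kernel-verified Lean document; each statement's English description precedes it below -/
import Mathlib

section
/- Let k be a positive integer. If {1, 8k², 8k²+1, d} is a D(-8k²)-quadruple of positive integers, then d = 32k²+1, and in that case 24k²+1 is a perfect square. -/
/-!
From `8k²(d - 1) = □` we get `d = 2s² + 1`, and `(8k² + 1)d - 8k² = z²` then says that `(z, s)`
solves the Pell equation `z² - (16k² + 2)s² = 1`, whose fundamental solution is
`a = (16k² + 1, 4k)`; so `(z, s)` is a power `aⁿ`, and every power of `a` has `y` divisible by `k`.
If `n = 2m` and `aᵐ = (X, Y)`, the last condition `d - 8k² = □` factors as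
`(4Y² + 1)(4(8k² + 1)Y² - 8k² + 1) = □` with coprime factors, so `4Y² + 1` is a square, `Y = 0`
and `d - 8k² = 1 - 8k² < 0`. If `n` is odd, `a` is the square of `√(8k² + 1) + 2k√2`, so
`aⁿ = (P√(8k² + 1) + V√2)²` with `s = 2PV`, and the condition factors as
`(2P² - 1)(4V² + 8k² + 1) = □`; now `4V² + 8k² + 1` is a square, so `V ≤ 2k²`, which only
leaves `n = 1`, i.e. `s = 4k`.
-/

theorem Int.two_mul_add_one_le_of_sq_add_eq_sq {u m b : ℤ} (hu : 0 ≤ u) (h : u ^ 2 + m = b ^ 2)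
    (hm : 0 < m) : 2 * u + 1 ≤ m := by
  have hub : u < |b| := by
    simpa [abs_of_nonneg hu] using sq_lt_sq.mp (by linarith : u ^ 2 < b ^ 2)
  nlinarith [sq_abs b]

theorem Int.sq_of_isCoprime_of_pos {a b c : ℤ} (ha : 0 < a) (hab : IsCoprime a b)
    (h : a * b = c ^ 2) : ∃ r, a = r ^ 2 := by
  obtain ⟨r, hr | hr⟩ := Int.sq_of_isCoprime hab h
  · exact ⟨r, hr⟩
  · nlinarith [sq_nonneg r]

theorem Int.isCoprime_sixteen_mul_sq {a k : ℤ} (ha : Odd a) (hk : k ∣ a - 1) :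
    IsCoprime a (16 * k ^ 2) := by
  obtain ⟨j, rfl⟩ := ha
  obtain ⟨m, hm⟩ := hk
  have h2 : IsCoprime (2 * j + 1) 2 := ⟨1, -j, by ring⟩
  have hk : IsCoprime (2 * j + 1) k := ⟨1, -m, by linear_combination hm⟩
  simpa [show (16 : ℤ) * k ^ 2 = 2 ^ 4 * k ^ 2 by norm_num] using
    (h2.pow_right (n := 4)).mul_right (hk.pow_right (n := 2))

theorem Int.exists_eq_two_mul_sq_of_two_mul_sq_mul_eq_sq {c m y : ℤ} (hc : c ≠ 0)
    (h : 2 * c ^ 2 * m = y ^ 2) : ∃ t, m = 2 * t ^ 2 := by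
  obtain ⟨w, rfl⟩ : c ∣ y :=
    (Int.pow_dvd_pow_iff two_ne_zero).mp ⟨2 * m, by linear_combination -h⟩
  have hw : 2 * m = w ^ 2 := mul_left_cancel₀ (pow_ne_zero 2 hc) (by linear_combination h)
  obtain ⟨t, rfl⟩ : Even w := (Int.even_pow (n := 2)).mp ⟨m, by linear_combination -hw⟩ |>.1
  exact ⟨t, by linarith⟩

namespace Pell

open Solution₁

def sqAddTwoSolution (n : ℤ) : Solution₁ (n ^ 2 + 2) := .mk (n ^ 2 + 1) n (by ring)

theorem isFundamental_sqAddTwoSolution {n : ℤ} (hn : 0 < n) :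
    IsFundamental (sqAddTwoSolution n) := by
  refine ⟨by simp only [sqAddTwoSolution, x_mk]; nlinarith, by simpa [sqAddTwoSolution],
    fun {b} hb => ?_⟩
  simp only [sqAddTwoSolution, x_mk]
  have hy : 0 < |b.y| := abs_pos.mpr (y_ne_zero_of_one_lt_x hb)
  have hb2 := b.prop_x
  rw [← sq_abs b.y] at hb2
  -- `n |y| < x`, so `(n |y| + 1)² ≤ x² = (n² + 2) y² + 1`, which forces `n ≤ |y|`
  have hnx : n * |b.y| + 1 ≤ b.x := by nlinarith
  have hny : n ≤ |b.y| := by nlinarith [mul_self_le_mul_self (by positivity) hnx]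
  nlinarith

theorem Solution₁.y_pow_nonneg {d : ℤ} {a : Solution₁ d} (hax : 0 < a.x) (hay : 0 ≤ a.y)
    (n : ℕ) : 0 ≤ (a ^ n).y := by
  induction n with
  | zero => simp
  | succ n ih =>
    rw [pow_succ, y_mul]
    have := x_pow_pos hax n
    positivity

theorem Solution₁.y_dvd_y_pow {d : ℤ} (a : Solution₁ d) (n : ℕ) : a.y ∣ (a ^ n).y := by
  induction n with
  | zero => simp
  | succ n ih =>
    rw [pow_succ, y_mul]
    exact dvd_add (dvd_mul_left _ _) (ih.mul_right _)

end Pell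

open Pell Solution₁

theorem sq_ne_of_even_pow {k : ℤ} (hk : k ≠ 0) (c : Solution₁ ((4 * k) ^ 2 + 2))
    (hkc : k ∣ c.y) (x : ℤ) : x ^ 2 ≠ 2 * (c ^ 2).y ^ 2 + 1 - 8 * k ^ 2 := by
  intro hx
  obtain ⟨j, hj⟩ := hkc
  have hy : (c ^ 2).y = 2 * c.x * c.y := by rw [pow_two c, y_mul]; ring
  have hfac : (4 * c.y ^ 2 + 1) * ((8 * k ^ 2 + 1) * (4 * c.y ^ 2 + 1) - 16 * k ^ 2) = x ^ 2 := by
    rw [hx, hy]; linear_combination (-8 * c.y ^ 2) * c.prop_x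
  have hcop : IsCoprime (4 * c.y ^ 2 + 1) ((8 * k ^ 2 + 1) * (4 * c.y ^ 2 + 1) - 16 * k ^ 2) := by
    have h := Int.isCoprime_sixteen_mul_sq (a := 4 * c.y ^ 2 + 1) (k := k)
      ⟨2 * c.y ^ 2, by ring⟩ ⟨4 * k * j ^ 2, by rw [hj]; ring⟩
    simpa [sub_eq_neg_add, mul_comm] using h.neg_right.add_mul_left_right (8 * k ^ 2 + 1)
  obtain ⟨r, hr⟩ := Int.sq_of_isCoprime_of_pos (by positivity) hcop hfac
  have h2y : 2 * (2 * |c.y|) + 1 ≤ 1 :=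
    Int.two_mul_add_one_le_of_sq_add_eq_sq (m := 1) (b := r) (by positivity)
      (by rw [mul_pow, sq_abs]; linear_combination hr) one_pos
  have hy0 : c.y = 0 := abs_nonpos_iff.mp (by linarith)
  rw [hy, hy0] at hx
  nlinarith [sq_nonneg x, pow_pos (abs_pos.mpr hk) 2, sq_abs k]

theorem le_of_sub_two_mul_sq_eq_one {k P V x : ℤ} (hk : 0 < k) (hP : 0 ≤ P) (hV : 0 ≤ V)
    (hPV : (8 * k ^ 2 + 1) * P ^ 2 - 2 * V ^ 2 = 1) (hkP : k ∣ P ^ 2 - 1)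
    (hx : x ^ 2 = 2 * (2 * P * V) ^ 2 + 1 - 8 * k ^ 2) : P ≤ k := by
  have hfac : (4 * V ^ 2 + 8 * k ^ 2 + 1) * (2 * P ^ 2 - 1) = x ^ 2 := by
    rw [hx]; linear_combination 2 * hPV
  have hcop : IsCoprime (4 * V ^ 2 + 8 * k ^ 2 + 1) (2 * P ^ 2 - 1) := by
    have h := Int.isCoprime_sixteen_mul_sq (a := 2 * P ^ 2 - 1) ⟨P ^ 2 - 1, by ring⟩
      (by simpa [show 2 * P ^ 2 - 1 - 1 = 2 * (P ^ 2 - 1) by ring] using hkP.mul_left 2)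
    have e : 4 * V ^ 2 + 8 * k ^ 2 + 1 = 16 * k ^ 2 + (2 * P ^ 2 - 1) * (8 * k ^ 2 + 1) := by
      linear_combination (-2) * hPV
    rw [e]
    exact (h.add_mul_left_right _).symm
  obtain ⟨b, hb⟩ := Int.sq_of_isCoprime_of_pos (by positivity) hcop hfac
  have hVk : 2 * (2 * V) + 1 ≤ 8 * k ^ 2 + 1 :=
    Int.two_mul_add_one_le_of_sq_add_eq_sq (m := 8 * k ^ 2 + 1) (b := b) (by positivity)
      (by linear_combination hb) (by positivity)
  -- `V ≤ 2 k²`, while `2 V² ≥ 8 k² P²` gives `V ≥ 2 k P`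
  by_contra! hkP
  have hk2 : k ^ 2 < P ^ 2 := by nlinarith
  nlinarith [mul_self_le_mul_self hV (by linarith : V ≤ 2 * k ^ 2),
    mul_lt_mul_of_pos_left hk2 (by positivity : (0 : ℤ) < k ^ 2)]

theorem eq_one_of_sq_eq_of_odd_pow {k : ℤ} (hk : 0 < k) {c : Solution₁ ((4 * k) ^ 2 + 2)}
    (hcx : 0 < c.x) (hcy : 0 ≤ c.y) (hkc : k ∣ c.y) (x : ℤ)
    (hx : x ^ 2 = 2 * (sqAddTwoSolution (4 * k) * c ^ 2).y ^ 2 + 1 - 8 * k ^ 2) : c = 1 := by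
  obtain ⟨j, hj⟩ := hkc
  -- `P √(8k² + 1) + V √2 = (√(8k² + 1) + 2k √2) c`, whose square is `a c²`
  have hP := le_of_sub_two_mul_sq_eq_one (P := c.x + 4 * k * c.y)
    (V := 2 * k * c.x + (8 * k ^ 2 + 1) * c.y) hk (by positivity) (by positivity)
    (by linear_combination c.prop)
    ⟨((4 * k) ^ 2 + 2) * j * c.y + 8 * c.x * c.y + 16 * k * c.y ^ 2, by
      linear_combination c.prop + ((4 * k) ^ 2 + 2) * c.y * hj⟩
    (by rw [hx]; simp only [sqAddTwoSolution, pow_two c, y_mul, x_mul, x_mk, y_mk]; ring)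
  have hy0 : c.y = 0 := by nlinarith
  refine (eq_one_or_neg_one_iff_y_eq_zero.mpr hy0).resolve_right fun h => ?_
  rw [h, x_neg, x_one] at hcx
  norm_num at hcx

theorem eq_four_mul_of_sq_eq {k s x z : ℤ} (hk : 0 < k) (hs : 0 ≤ s)
    (hz : z ^ 2 = ((4 * k) ^ 2 + 2) * s ^ 2 + 1) (hx : x ^ 2 = 2 * s ^ 2 + 1 - 8 * k ^ 2) :
    s = 4 * k := by
  set a := sqAddTwoSolution (4 * k)
  let b : Solution₁ ((4 * k) ^ 2 + 2) := .mk |z| s (by rw [sq_abs]; linear_combination hz)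
  have hbx : 0 < b.x := abs_pos.mpr fun h => by nlinarith [h ▸ hz]
  obtain ⟨n, hn⟩ := (isFundamental_sqAddTwoSolution (by positivity)).eq_pow_of_nonneg hbx hs
  have hax : 0 < a.x := by simp only [a, sqAddTwoSolution, x_mk]; positivity
  have hay : a.y = 4 * k := rfl
  have hsy : s = (a ^ n).y := congrArg Solution₁.y hn
  have hkdvd (m : ℕ) : k ∣ (a ^ m).y := (Dvd.intro_left 4 hay.symm).trans (y_dvd_y_pow a m)
  obtain ⟨m, rfl | rfl⟩ := n.even_or_odd'
  · rw [hsy, pow_mul'] at hx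
    exact absurd hx (sq_ne_of_even_pow hk.ne' _ (hkdvd m) x)
  · have hodd : a ^ (2 * m + 1) = a * (a ^ m) ^ 2 := by rw [pow_succ' a, pow_mul' a]
    rw [hsy, hodd] at hx
    have hc := eq_one_of_sq_eq_of_odd_pow hk (x_pow_pos hax m)
      (y_pow_nonneg hax (by rw [hay]; positivity) m) (hkdvd m) x hx
    rw [hsy, hodd, hc, one_pow, mul_one, hay]

theorem stmt_1_general (k d : ℤ) (hk : 0 < k)
    (h1d : ∃ x : ℤ, 1 * d - 8 * k ^ 2 = x ^ 2)
    (h2d : ∃ x : ℤ, 8 * k ^ 2 * d - 8 * k ^ 2 = x ^ 2)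
    (h3d : ∃ x : ℤ, (8 * k ^ 2 + 1) * d - 8 * k ^ 2 = x ^ 2) :
    d = 32 * k ^ 2 + 1 ∧ ∃ x : ℤ, 24 * k ^ 2 + 1 = x ^ 2 := by
  obtain ⟨x, hx⟩ := h1d
  obtain ⟨y, hy⟩ := h2d
  obtain ⟨z, hz⟩ := h3d
  obtain ⟨t, hd⟩ := Int.exists_eq_two_mul_sq_of_two_mul_sq_mul_eq_sq (c := 2 * k) (m := d - 1)
    (y := y) (by positivity) (by linear_combination hy)
  obtain rfl : d = 2 * t ^ 2 + 1 := by linarith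
  have ht : |t| = 4 * k := eq_four_mul_of_sq_eq (x := x) (z := z) hk (abs_nonneg t)
    (by rw [sq_abs]; linear_combination -hz) (by rw [sq_abs]; linear_combination -hx)
  have ht2 : t ^ 2 = 16 * k ^ 2 := by rw [← sq_abs, ht]; ring
  exact ⟨by rw [ht2]; ring, x, by linear_combination hx - 2 * ht2⟩

/-- If `{1, 8k², 8k²+1, d}` is a `D(-8k²)`-quadruple of positive integers,
then `d = 32k²+1`, and in that case `24k²+1` is a perfect square. -/
theorem stmt_1 (k d : ℤ) (hk : 0 < k) (hd : 0 < d)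
    (hd1 : d ≠ 1) (hd2 : d ≠ 8 * k ^ 2) (hd3 : d ≠ 8 * k ^ 2 + 1)
    (h12 : ∃ x : ℤ, 1 * (8 * k ^ 2) - 8 * k ^ 2 = x ^ 2)
    (h13 : ∃ x : ℤ, 1 * (8 * k ^ 2 + 1) - 8 * k ^ 2 = x ^ 2)
    (h23 : ∃ x : ℤ, 8 * k ^ 2 * (8 * k ^ 2 + 1) - 8 * k ^ 2 = x ^ 2)
    (h1d : ∃ x : ℤ, 1 * d - 8 * k ^ 2 = x ^ 2)
    (h2d : ∃ x : ℤ, 8 * k ^ 2 * d - 8 * k ^ 2 = x ^ 2)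
    (h3d : ∃ x : ℤ, (8 * k ^ 2 + 1) * d - 8 * k ^ 2 = x ^ 2) :
    d = 32 * k ^ 2 + 1 ∧ ∃ x : ℤ, 24 * k ^ 2 + 1 = x ^ 2 :=
  stmt_1_general k d hk h1d h2d h3d
end

section
/- Let k be a positive integer. If {1, 8k², 8k²+1, d} is a D(-8k²)-quadruple of positive integers, then there exist nonnegative integers x, y, z such that d = 2y² + 1, x² − 2y² = 1 − 8k², and z² − (16k²+2)y² = 1. -/
/-! The condition on the pair `8k², d` says that `8k²(d - 1)` is a square, which forces
`d - 1 = 2y²`. Substituting `d = 2y² + 1` into the conditions on the pairs `1, d` and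
`8k² + 1, d` gives the two Pell-type equations directly. -/

theorem exists_eq_two_mul_sq_of_sq_eq_two_mul {n u : ℤ} (h : u ^ 2 = 2 * n) :
    ∃ y, n = 2 * y ^ 2 := by
  obtain ⟨y, rfl⟩ : Even u := Int.even_pow.mp ⟨n, by rw [h]; ring⟩ |>.1
  exact ⟨y, by linarith⟩

theorem exists_eq_two_mul_sq_of_eight_mul_sq_mul_eq_sq {k m x : ℤ} (hk : k ≠ 0)
    (h : 8 * k ^ 2 * m = x ^ 2) : ∃ y, m = 2 * y ^ 2 := by
  obtain ⟨u, rfl⟩ : 2 * k ∣ x :=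
    (Int.pow_dvd_pow_iff two_ne_zero).mp ⟨2 * m, by rw [← h]; ring⟩
  have hu : (2 * k) ^ 2 * u ^ 2 = (2 * k) ^ 2 * (2 * m) := by linear_combination -h
  exact exists_eq_two_mul_sq_of_sq_eq_two_mul (mul_left_cancel₀ (by positivity) hu)

theorem stmt_2_general (k d : ℤ) (hk : 0 < k)
    (h1d : ∃ x : ℤ, 1 * d - 8 * k ^ 2 = x ^ 2)
    (h2d : ∃ x : ℤ, 8 * k ^ 2 * d - 8 * k ^ 2 = x ^ 2)
    (h3d : ∃ x : ℤ, (8 * k ^ 2 + 1) * d - 8 * k ^ 2 = x ^ 2) :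
    ∃ x y z : ℤ, 0 ≤ x ∧ 0 ≤ y ∧ 0 ≤ z ∧ d = 2 * y ^ 2 + 1 ∧
      x ^ 2 - 2 * y ^ 2 = 1 - 8 * k ^ 2 ∧ z ^ 2 - (16 * k ^ 2 + 2) * y ^ 2 = 1 := by
  obtain ⟨x, hx⟩ := h1d
  obtain ⟨w, hw⟩ := h2d
  obtain ⟨z, hz⟩ := h3d
  obtain ⟨y, hy⟩ : ∃ y, d - 1 = 2 * y ^ 2 :=
    exists_eq_two_mul_sq_of_eight_mul_sq_mul_eq_sq hk.ne'
      (by linear_combination hw : 8 * k ^ 2 * (d - 1) = w ^ 2)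
  obtain rfl : d = 2 * y ^ 2 + 1 := by linarith
  refine ⟨|x|, |y|, |z|, abs_nonneg _, abs_nonneg _, abs_nonneg _, ?_, ?_, ?_⟩ <;>
    simp only [sq_abs]
  · linear_combination -hx
  · linear_combination -hz

/-- If `{1, 8k², 8k²+1, d}` is a `D(-8k²)`-quadruple of positive integers, then there exist
nonnegative integers `x, y, z` with `d = 2y²+1`, `x² - 2y² = 1 - 8k²` and
`z² - (16k²+2)y² = 1`. -/
theorem stmt_2 (k d : ℤ) (hk : 0 < k) (hd : 0 < d)
    (hd1 : d ≠ 1) (hd2 : d ≠ 8 * k ^ 2) (hd3 : d ≠ 8 * k ^ 2 + 1)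
    (h12 : ∃ x : ℤ, 1 * (8 * k ^ 2) - 8 * k ^ 2 = x ^ 2)
    (h13 : ∃ x : ℤ, 1 * (8 * k ^ 2 + 1) - 8 * k ^ 2 = x ^ 2)
    (h23 : ∃ x : ℤ, 8 * k ^ 2 * (8 * k ^ 2 + 1) - 8 * k ^ 2 = x ^ 2)
    (h1d : ∃ x : ℤ, 1 * d - 8 * k ^ 2 = x ^ 2)
    (h2d : ∃ x : ℤ, 8 * k ^ 2 * d - 8 * k ^ 2 = x ^ 2)
    (h3d : ∃ x : ℤ, (8 * k ^ 2 + 1) * d - 8 * k ^ 2 = x ^ 2) :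
    ∃ x y z : ℤ, 0 ≤ x ∧ 0 ≤ y ∧ 0 ≤ z ∧ d = 2 * y ^ 2 + 1 ∧
      x ^ 2 - 2 * y ^ 2 = 1 - 8 * k ^ 2 ∧ z ^ 2 - (16 * k ^ 2 + 2) * y ^ 2 = 1 :=
  stmt_2_general k d hk h1d h2d h3d
end

section
/- Let k be a positive integer and let (z_n), (y_n) be defined by z_0 = 1, y_0 = 0, z_{n+1} = (16k²+1)z_n + 4k(16k²+2)y_n, y_{n+1} = (16k²+1)y_n + 4k·z_n. Then for every n ∈ ℕ, the integers 4y_n² + 1 and 32k²y_n² + 4y_n² − 8k² + 1 are relatively prime. -/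
/-- The pair `(z n, y n)` of sequences with `z 0 = 1`, `y 0 = 0`,
`z (n+1) = (16k^2+1) * z n + 4k(16k^2+2) * y n` and `y (n+1) = (16k^2+1) * y n + 4k * z n`. -/
def zy (k : ℤ) : ℕ → ℤ × ℤ
  | 0 => (1, 0)
  | n + 1 =>
    ((16 * k ^ 2 + 1) * (zy k n).1 + 4 * k * (16 * k ^ 2 + 2) * (zy k n).2,
     (16 * k ^ 2 + 1) * (zy k n).2 + 4 * k * (zy k n).1)

theorem four_mul_dvd_zy_snd (k : ℤ) (n : ℕ) : 4 * k ∣ (zy k n).2 := by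
  induction n with
  | zero => exact dvd_zero _
  | succ n ih => exact dvd_add (ih.mul_left _) (dvd_mul_right _ _)

theorem isCoprime_of_four_mul_dvd {k y : ℤ} (h : 4 * k ∣ y) :
    IsCoprime (4 * y ^ 2 + 1) (32 * k ^ 2 * y ^ 2 + 4 * y ^ 2 - 8 * k ^ 2 + 1) := by
  obtain ⟨m, rfl⟩ := h
  -- With `A = 64k²m² + 1` the second number is `(8k² + 1)(A - 1) - 8k² + 1 ≡ -16k² (mod A)`,
  -- so its product with `4m²` is `≡ -64k²m² ≡ 1 (mod A)`.
  exact ⟨1 - 4 * m ^ 2 * (8 * k ^ 2 + 1), 4 * m ^ 2, by ring⟩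

theorem stmt_7_general (k : ℤ) (n : ℕ) :
    IsCoprime (4 * (zy k n).2 ^ 2 + 1)
      (32 * k ^ 2 * (zy k n).2 ^ 2 + 4 * (zy k n).2 ^ 2 - 8 * k ^ 2 + 1) :=
  isCoprime_of_four_mul_dvd (four_mul_dvd_zy_snd k n)

/-- For every `n`, the integers `4 * (y n)^2 + 1` and
`32k^2 * (y n)^2 + 4 * (y n)^2 - 8k^2 + 1` are relatively prime. -/
theorem stmt_7 (k : ℤ) (hk : 0 < k) (n : ℕ) :
    IsCoprime (4 * (zy k n).2 ^ 2 + 1)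
      (32 * k ^ 2 * (zy k n).2 ^ 2 + 4 * (zy k n).2 ^ 2 - 8 * k ^ 2 + 1) :=
  stmt_7_general k n
end

section
/- Let k be a positive integer and let (z_n), (y_n) be defined by z_0 = 1, y_0 = 0, z_{n+1} = (16k²+1)z_n + 4k(16k²+2)y_n, y_{n+1} = (16k²+1)y_n + 4k·z_n. Then for every n ≥ 1, the integer 2·y_{2n}² − 8k² + 1 is not a perfect square. -/
lemma eq_zero_of_four_mul_sq_add_one_eq_sq {y b : ℤ} (h : 4 * y ^ 2 + 1 = b ^ 2) : y = 0 := by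
  have hmul : (b - 2 * y) * (b + 2 * y) = 1 := by linear_combination -h
  rcases Int.mul_eq_one_iff_eq_one_or_neg_one.mp hmul with ⟨h₁, h₂⟩ | ⟨h₁, h₂⟩ <;> omega

section Pell

variable {z y k : ℤ}

lemma pell_factor (hpell : z ^ 2 - (16 * k ^ 2 + 2) * y ^ 2 = 1) :
    2 * (2 * z * y) ^ 2 - 8 * k ^ 2 + 1 = (4 * y ^ 2 + 1) * (2 * z ^ 2 - 8 * k ^ 2 - 1) := by
  linear_combination -2 * hpell

lemma isCoprime_pell_factors (hpell : z ^ 2 - (16 * k ^ 2 + 2) * y ^ 2 = 1) (hky : k ∣ y) :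
    IsCoprime (4 * y ^ 2 + 1) (2 * z ^ 2 - 8 * k ^ 2 - 1) := by
  obtain ⟨c, rfl⟩ := hky
  have h_two : IsCoprime (4 * (k * c) ^ 2 + 1) 2 := ⟨1, -2 * (k * c) ^ 2, by ring⟩
  have h_k : IsCoprime (4 * (k * c) ^ 2 + 1) k := ⟨1, -(4 * c ^ 2 * k), by ring⟩
  have h_64k2 : IsCoprime (4 * (k * c) ^ 2 + 1) (2 ^ 6 * k ^ 2) :=
    h_two.pow_right.mul_right h_k.pow_right
  have h_four_mul : IsCoprime (4 * (k * c) ^ 2 + 1) (4 * (2 * z ^ 2 - 8 * k ^ 2 - 1)) := by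
    have h_mod : 4 * (2 * z ^ 2 - 8 * k ^ 2 - 1) =
        -(2 ^ 6 * k ^ 2) + (4 * (k * c) ^ 2 + 1) * (2 * (16 * k ^ 2 + 2)) := by
      linear_combination 8 * hpell
    rw [h_mod]
    exact h_64k2.neg_right.add_mul_left_right _
  exact h_four_mul.of_mul_right_right

theorem not_exists_sq_of_pell (hpell : z ^ 2 - (16 * k ^ 2 + 2) * y ^ 2 = 1) (hky : k ∣ y)
    (hy : y ≠ 0) : ¬ ∃ x : ℤ, 2 * (2 * z * y) ^ 2 - 8 * k ^ 2 + 1 = x ^ 2 := by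
  rintro ⟨x, hx⟩
  rw [pell_factor hpell] at hx
  obtain ⟨b, hb | hb⟩ := Int.sq_of_isCoprime (isCoprime_pell_factors hpell hky) hx
  · exact hy (eq_zero_of_four_mul_sq_add_one_eq_sq hb)
  · nlinarith [sq_nonneg b, sq_nonneg y]

end Pell

namespace zy

variable (k : ℤ)

lemma pell (n : ℕ) : (zy k n).1 ^ 2 - (16 * k ^ 2 + 2) * (zy k n).2 ^ 2 = 1 := by
  induction n with
  | zero => simp [zy]
  | succ n ih => simp only [zy]; linear_combination ih

lemma add (m n : ℕ) :
    zy k (m + n) = ((zy k m).1 * (zy k n).1 + (16 * k ^ 2 + 2) * (zy k m).2 * (zy k n).2,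
      (zy k m).1 * (zy k n).2 + (zy k m).2 * (zy k n).1) := by
  induction n with
  | zero => simp [zy]
  | succ n ih =>
    rw [← add_assoc]
    simp only [zy, ih]
    refine Prod.ext ?_ ?_ <;> ring

lemma snd_two_mul (n : ℕ) : (zy k (2 * n)).2 = 2 * (zy k n).1 * (zy k n).2 := by
  rw [two_mul, add]
  ring

lemma dvd_snd (n : ℕ) : k ∣ (zy k n).2 := by
  induction n with
  | zero => simp [zy]
  | succ n ih => exact dvd_add (ih.mul_left _) ⟨4 * (zy k n).1, by ring⟩

variable {k}

lemma fst_pos_and_snd_nonneg (hk : 0 ≤ k) (n : ℕ) : 0 < (zy k n).1 ∧ 0 ≤ (zy k n).2 := by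
  induction n with
  | zero => simp [zy]
  | succ n ih =>
    obtain ⟨hz, hy⟩ := ih
    simp only [zy]
    constructor <;> positivity

lemma snd_pos (hk : 0 < k) {n : ℕ} (hn : n ≠ 0) : 0 < (zy k n).2 := by
  obtain ⟨n, rfl⟩ := Nat.exists_eq_succ_of_ne_zero hn
  obtain ⟨hz, hy⟩ := fst_pos_and_snd_nonneg hk.le n
  simp only [zy]
  positivity

end zy

/-- For every `n ≥ 1`, the integer `2 * (y (2n))^2 - 8k^2 + 1` is not a perfect square. -/
theorem stmt_8 (k : ℤ) (hk : 0 < k) (n : ℕ) (hn : 1 ≤ n) :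
    ¬ ∃ x : ℤ, 2 * (zy k (2 * n)).2 ^ 2 - 8 * k ^ 2 + 1 = x ^ 2 := by
  rw [zy.snd_two_mul]
  exact not_exists_sq_of_pell (zy.pell k n) (zy.dvd_snd k n) (zy.snd_pos hk (by omega)).ne'
end

section
/- Let k be a positive integer and let (z_n), (y_n) be defined by z_0 = 1, y_0 = 0, z_{n+1} = (16k²+1)z_n + 4k(16k²+2)y_n, y_{n+1} = (16k²+1)y_n + 4k·z_n. Then for every n ∈ ℕ, 8k²+1 divides z_{2n} − 1 and 8k²+1 divides z_{2n+1} − 8k². -/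
/-- Modulo `8k² + 1` the recurrence for `z` becomes `z (n+1) ≡ -z n`, since
`16k² + 1 ≡ -1` and `4k(16k² + 2) = 8k(8k² + 1) ≡ 0`. -/
theorem zy_fst_modEq_neg_one_pow (k : ℤ) (n : ℕ) :
    (zy k n).1 ≡ (-1) ^ n [ZMOD 8 * k ^ 2 + 1] := by
  induction n with
  | zero => rfl
  | succ n ih =>
    have h_diag : 16 * k ^ 2 + 1 ≡ -1 [ZMOD 8 * k ^ 2 + 1] :=
      Int.modEq_iff_dvd.mpr ⟨-2, by ring⟩
    have h_off : 4 * k * (16 * k ^ 2 + 2) ≡ 0 [ZMOD 8 * k ^ 2 + 1] :=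
      Int.modEq_zero_iff_dvd.mpr ⟨8 * k, by ring⟩
    calc (zy k (n + 1)).1
        = (16 * k ^ 2 + 1) * (zy k n).1 + 4 * k * (16 * k ^ 2 + 2) * (zy k n).2 := rfl
      _ ≡ -1 * (-1) ^ n + 0 * (zy k n).2 [ZMOD 8 * k ^ 2 + 1] :=
        (h_diag.mul ih).add (h_off.mul_right _)
      _ = (-1) ^ (n + 1) := by ring

theorem stmt_9_general (k : ℤ) (n : ℕ) :
    (8 * k ^ 2 + 1) ∣ ((zy k (2 * n)).1 - 1) ∧
      (8 * k ^ 2 + 1) ∣ ((zy k (2 * n + 1)).1 - 8 * k ^ 2) := by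
  have h_even : (zy k (2 * n)).1 ≡ 1 [ZMOD 8 * k ^ 2 + 1] := by
    simpa [pow_mul] using zy_fst_modEq_neg_one_pow k (2 * n)
  have h_odd : (zy k (2 * n + 1)).1 ≡ -1 [ZMOD 8 * k ^ 2 + 1] := by
    simpa [pow_succ, pow_mul] using zy_fst_modEq_neg_one_pow k (2 * n + 1)
  have h_neg_one : -1 ≡ 8 * k ^ 2 [ZMOD 8 * k ^ 2 + 1] := Int.modEq_iff_dvd.mpr ⟨1, by ring⟩
  exact ⟨h_even.symm.dvd, (h_odd.trans h_neg_one).symm.dvd⟩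

/-- For every `n`, `8k^2+1` divides `z (2n) - 1` and `8k^2+1` divides `z (2n+1) - 8k^2`. -/
theorem stmt_9 (k : ℤ) (hk : 0 < k) (n : ℕ) :
    (8 * k ^ 2 + 1) ∣ ((zy k (2 * n)).1 - 1) ∧
      (8 * k ^ 2 + 1) ∣ ((zy k (2 * n + 1)).1 - 8 * k ^ 2) :=
  stmt_9_general k n
end

section
/- Let k be a positive integer and let (z_n), (y_n) be defined by z_0 = 1, y_0 = 0, z_{n+1} = (16k²+1)z_n + 4k(16k²+2)y_n, y_{n+1} = (16k²+1)y_n + 4k·z_n. Then for every n ≥ 1, the integer z_{2n+1} + 8k² is not a perfect square. -/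
theorem Int.sq_add_ne_sq {s m : ℤ} (hm : 0 < m) (hms : m ≤ 2 * s) (x : ℤ) :
    s ^ 2 + m ≠ x ^ 2 := by
  intro h
  have hs : s < |x| :=
    lt_of_pow_lt_pow_left₀ 2 (abs_nonneg x) (by rw [sq_abs]; linarith)
  have hs' : (s + 1) ^ 2 ≤ x ^ 2 := sq_abs x ▸ pow_le_pow_left₀ (by linarith) hs 2
  linarith

namespace zy

@[simps]
def unit (k : ℤ) : ℤ√(16 * k ^ 2 + 2) := ⟨16 * k ^ 2 + 1, 4 * k⟩

theorem norm_unit (k : ℤ) : (unit k).norm = 1 := by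
  rw [Zsqrtd.norm_def, unit_re, unit_im]
  ring

theorem eq_unit_pow (k : ℤ) (n : ℕ) : zy k n = ((unit k ^ n).re, (unit k ^ n).im) := by
  induction n with
  | zero => rfl
  | succ n ih =>
    rw [zy, ih, pow_succ (unit k)]
    ext <;> simp only [Zsqrtd.re_mul, Zsqrtd.im_mul, unit_re, unit_im] <;> ring

theorem fst_sq_sub_mul_snd_sq (k : ℤ) (n : ℕ) :
    (zy k n).1 ^ 2 - (16 * k ^ 2 + 2) * (zy k n).2 ^ 2 = 1 := by
  have h : (unit k ^ n).norm = 1 :=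
    (map_pow Zsqrtd.normMonoidHom (unit k) n).trans (by
      rw [show Zsqrtd.normMonoidHom (unit k) = 1 from norm_unit k, one_pow])
  rw [Zsqrtd.norm_def] at h
  rw [eq_unit_pow]
  linear_combination h

theorem fst_two_mul_add_one (k : ℤ) (n : ℕ) :
    (zy k (2 * n + 1)).1 = ((zy k n).2 + (zy k (n + 1)).2) ^ 2 + 1 := by
  have hpell := fst_sq_sub_mul_snd_sq k n
  rw [eq_unit_pow] at hpell
  rw [eq_unit_pow, eq_unit_pow, eq_unit_pow, two_mul, pow_succ (unit k), pow_succ (unit k),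
    pow_add]
  simp only [Zsqrtd.re_mul, Zsqrtd.im_mul, unit_re, unit_im]
  linear_combination hpell

theorem nonneg {k : ℤ} (hk : 0 ≤ k) (n : ℕ) : 0 ≤ (zy k n).1 ∧ 0 ≤ (zy k n).2 := by
  induction n with
  | zero => simp [zy]
  | succ n ih =>
    obtain ⟨hz, hy⟩ := ih
    exact ⟨add_nonneg (mul_nonneg (by positivity) hz) (mul_nonneg (by positivity) hy),
      add_nonneg (mul_nonneg (by positivity) hy) (mul_nonneg (by positivity) hz)⟩

theorem snd_monotone {k : ℤ} (hk : 0 ≤ k) : Monotone fun n ↦ (zy k n).2 := by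
  refine monotone_nat_of_le_succ fun n ↦ ?_
  obtain ⟨hz, hy⟩ := nonneg hk n
  show _ ≤ (16 * k ^ 2 + 1) * (zy k n).2 + 4 * k * (zy k n).1
  nlinarith [mul_nonneg (mul_nonneg hk hk) hy, mul_nonneg hk hz]

theorem snd_two (k : ℤ) : (zy k 2).2 = 8 * k * (16 * k ^ 2 + 1) := by
  simp only [zy]
  ring

end zy

/-- For every `n ≥ 1`, the integer `z (2n+1) + 8k^2` is not a perfect square. -/
theorem stmt_10 (k : ℤ) (hk : 0 < k) (n : ℕ) (hn : 1 ≤ n) :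
    ¬ ∃ x : ℤ, (zy k (2 * n + 1)).1 + 8 * k ^ 2 = x ^ 2 := by
  rintro ⟨x, hx⟩
  have hyn : 0 ≤ (zy k n).2 := (zy.nonneg hk.le n).2
  have hy₂ : (zy k 2).2 ≤ (zy k (n + 1)).2 := zy.snd_monotone hk.le (by omega)
  rw [zy.snd_two] at hy₂
  refine Int.sq_add_ne_sq (s := (zy k n).2 + (zy k (n + 1)).2) (m := 8 * k ^ 2 + 1)
    (by positivity) (by nlinarith) x ?_
  rw [← hx, zy.fst_two_mul_add_one]
  ring
end

section
/- Let k be a positive integer and let (z_n), (y_n) be defined by z_0 = 1, y_0 = 0, z_{n+1} = (16k²+1)z_n + 4k(16k²+2)y_n, y_{n+1} = (16k²+1)y_n + 4k·z_n. Then for every n ∈ ℕ, the integers (z_{2n+1} − 8k²)/(8k²+1) and z_{2n+1} + 8k² are relatively prime. -/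
theorem isCoprime_ediv_of_dvd_sub_one_of_dvd_add_one {b z : ℤ}
    (h₁ : 4 * b ∣ z - 1) (h₂ : 2 * b + 1 ∣ z + 1) :
    IsCoprime ((z - 2 * b) / (2 * b + 1)) (z + 2 * b) := by
  obtain ⟨t, ht⟩ := h₁
  obtain ⟨s, hs⟩ := h₂
  have hA : (z - 2 * b) / (2 * b + 1) = s - 1 := by
    rw [show z - 2 * b = (2 * b + 1) * (s - 1) by linear_combination hs,
      Int.mul_ediv_cancel_left _ (by omega)]
  rw [hA, show z + 2 * b = 4 * b + (s - 1) * (2 * b + 1) by linear_combination hs]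
  refine IsCoprime.add_mul_left_right ?_ _
  have h_base : IsCoprime (1 - 2 * b) (4 * b) := ⟨1 + 2 * b, b, by ring⟩
  have h_mul : IsCoprime ((2 * b + 1) * (s - 1)) (4 * b) := by
    rw [show (2 * b + 1) * (s - 1) = 1 - 2 * b + t * (4 * b) by linear_combination ht - hs]
    exact h_base.add_mul_right_left t
  exact h_mul.of_mul_left_right

theorem dvd_zy_fst_sub_one_and_dvd_zy_snd (k : ℤ) :
    ∀ n, 16 * k ^ 2 ∣ (zy k n).1 - 1 ∧ 4 * k ∣ (zy k n).2
  | 0 => by simp [zy]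
  | n + 1 => by
    obtain ⟨⟨a, ha⟩, ⟨b, hb⟩⟩ := dvd_zy_fst_sub_one_and_dvd_zy_snd k n
    constructor
    · exact ⟨(zy k n).1 + a + (16 * k ^ 2 + 2) * b, by
        simp only [zy]; linear_combination ha + 4 * k * (16 * k ^ 2 + 2) * hb⟩
    · exact ⟨(16 * k ^ 2 + 1) * b + (zy k n).1, by
        simp only [zy]; linear_combination (16 * k ^ 2 + 1) * hb⟩

theorem dvd_zy_fst_sub_neg_one_pow (k : ℤ) :
    ∀ n, 8 * k ^ 2 + 1 ∣ (zy k n).1 - (-1) ^ n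
  | 0 => by simp [zy]
  | n + 1 => by
    obtain ⟨c, hc⟩ := dvd_zy_fst_sub_neg_one_pow k n
    exact ⟨2 * (zy k n).1 + 8 * k * (zy k n).2 - c, by
      simp only [zy, pow_succ]; linear_combination -hc⟩

theorem stmt_11_general (k : ℤ) (n : ℕ) :
    IsCoprime (((zy k (2 * n + 1)).1 - 8 * k ^ 2) / (8 * k ^ 2 + 1))
      ((zy k (2 * n + 1)).1 + 8 * k ^ 2) := by
  have h₁ : 4 * (4 * k ^ 2) ∣ (zy k (2 * n + 1)).1 - 1 := by
    convert (dvd_zy_fst_sub_one_and_dvd_zy_snd k (2 * n + 1)).1 using 1; ring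
  have h₂ : 2 * (4 * k ^ 2) + 1 ∣ (zy k (2 * n + 1)).1 + 1 := by
    simpa [(odd_two_mul_add_one n).neg_one_pow, ← mul_assoc] using
      dvd_zy_fst_sub_neg_one_pow k (2 * n + 1)
  rw [show (8 : ℤ) * k ^ 2 = 2 * (4 * k ^ 2) by ring]
  exact isCoprime_ediv_of_dvd_sub_one_of_dvd_add_one h₁ h₂

/-- For every `n`, the integers `(z (2n+1) - 8k^2) / (8k^2+1)` and `z (2n+1) + 8k^2`
are relatively prime. -/
theorem stmt_11 (k : ℤ) (hk : 0 < k) (n : ℕ) :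
    IsCoprime (((zy k (2 * n + 1)).1 - 8 * k ^ 2) / (8 * k ^ 2 + 1))
      ((zy k (2 * n + 1)).1 + 8 * k ^ 2) :=
  stmt_11_general k n
end

section
/- Let k be a positive integer and let (z_n), (y_n) be defined by z_0 = 1, y_0 = 0, z_{n+1} = (16k²+1)z_n + 4k(16k²+2)y_n, y_{n+1} = (16k²+1)y_n + 4k·z_n. If for some n ∈ ℕ the integer 2·y_n² − 8k² + 1 is a perfect square, then n = 1, and in that case 2·y_1² − 8k² + 1 = 24k² + 1. -/
open Pell

theorem Int.two_mul_abs_add_one_le_of_sq_eq_sq_add {r v N : ℤ} (hN : 0 < N)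
    (h : r ^ 2 = v ^ 2 + N) : 2 * |v| + 1 ≤ N := by
  have hlt : |v| < |r| := sq_lt_sq.mp (by linarith)
  nlinarith [sq_abs r, sq_abs v, abs_nonneg v]

theorem Int.eq_sq_of_isCoprime_of_pos {a b c : ℤ} (h : IsCoprime a b) (heq : a * b = c ^ 2)
    (ha : 0 < a) : ∃ r, a = r ^ 2 := by
  obtain ⟨r, hr | hr⟩ := Int.sq_of_isCoprime h heq
  · exact ⟨r, hr⟩
  · nlinarith [sq_nonneg r]

theorem Int.isCoprime_sub_add_of_dvd_sub_one {x e : ℤ} (h : 4 * e ∣ x - 1) :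
    IsCoprime (x - 2 * e) (x + 2 * e) := by
  obtain ⟨s, hs⟩ := h
  exact ⟨1 - e * (2 * s - 1) * (2 * s + 1), e * (2 * s - 1) ^ 2, by
    rw [show x = 1 + 4 * e * s by linarith]; ring⟩

section

variable (k : ℤ)

def fundSol : Solution₁ (16 * k ^ 2 + 2) :=
  .mk (16 * k ^ 2 + 1) (4 * k) (by ring)

@[simp] theorem fundSol_x : (fundSol k).x = 16 * k ^ 2 + 1 := Solution₁.x_mk ..

@[simp] theorem fundSol_y : (fundSol k).y = 4 * k := Solution₁.y_mk ..

theorem zy_eq_fundSol_pow (n : ℕ) : zy k n = ((fundSol k ^ n).x, (fundSol k ^ n).y) := by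
  induction n with
  | zero => simp [zy]
  | succ n ih =>
    simp only [zy, ih, pow_succ, Solution₁.x_mul, Solution₁.y_mul, fundSol_x, fundSol_y]
    ext <;> ring

theorem fundSol_pow_dvd (n : ℕ) :
    16 * k ^ 2 ∣ (fundSol k ^ n).x - 1 ∧ 4 * k ∣ (fundSol k ^ n).y := by
  induction n with
  | zero => simp
  | succ n ih =>
    obtain ⟨⟨s, hs⟩, ⟨t, ht⟩⟩ := ih
    simp only [pow_succ, Solution₁.x_mul, Solution₁.y_mul, fundSol_x, fundSol_y]
    refine ⟨⟨(16 * k ^ 2 + 1) * s + 1 + (16 * k ^ 2 + 2) * t, ?_⟩,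
      ⟨(16 * k ^ 2 + 1) * t + (fundSol k ^ n).x, ?_⟩⟩
    · rw [ht, show (fundSol k ^ n).x = 16 * k ^ 2 * s + 1 by linarith]; ring
    · rw [ht]; ring

theorem isCoprime_fundSol_pow (n : ℕ) :
    IsCoprime ((fundSol k ^ n).x - 8 * k ^ 2) ((fundSol k ^ n).x + 8 * k ^ 2) := by
  have h := Int.isCoprime_sub_add_of_dvd_sub_one (e := 4 * k ^ 2) (x := (fundSol k ^ n).x)
    (by rw [← mul_assoc]; exact (fundSol_pow_dvd k n).1)
  rwa [← mul_assoc] at h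

variable {k}

theorem mul_sq_eq_of_two_mul_y_sq_sub_eq_sq (a : Solution₁ (16 * k ^ 2 + 2)) {x : ℤ}
    (h : 2 * a.y ^ 2 - 8 * k ^ 2 + 1 = x ^ 2) :
    (8 * k ^ 2 + 1) * x ^ 2 = (a.x - 8 * k ^ 2) * (a.x + 8 * k ^ 2) := by
  linear_combination (-(8 * k ^ 2 + 1)) * h - a.prop

theorem x_sq_add_eq (a : Solution₁ (16 * k ^ 2 + 2)) :
    (a ^ 2).x + 8 * k ^ 2 = (8 * k ^ 2 + 1) * (1 + 4 * a.y ^ 2) := by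
  rw [pow_two a, Solution₁.x_mul]; linear_combination a.prop

theorem x_sq_mul_fundSol_add_eq (a : Solution₁ (16 * k ^ 2 + 2)) :
    (a ^ 2 * fundSol k).x + 8 * k ^ 2
      = (2 * (8 * k ^ 2 + 1) * a.y + 4 * k * a.x) ^ 2 + (8 * k ^ 2 + 1) := by
  simp only [pow_two a, Solution₁.x_mul, Solution₁.y_mul, fundSol_x, fundSol_y]
  linear_combination a.prop

theorem x_sq_mul_fundSol_sub_eq (a : Solution₁ (16 * k ^ 2 + 2)) :
    (a ^ 2 * fundSol k).x - 8 * k ^ 2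
      = (8 * k ^ 2 + 1) * (4 * (16 * k ^ 2 + 1) * a.y ^ 2 + 16 * k * a.x * a.y + 1) := by
  simp only [pow_two a, Solution₁.x_mul, Solution₁.y_mul, fundSol_x, fundSol_y]
  linear_combination (16 * k ^ 2 + 1) * a.prop

theorem two_mul_y_sq_sub_ne_sq_of_even (hk : k ≠ 0) (m : ℕ) (x : ℤ) :
    2 * (fundSol k ^ (2 * m)).y ^ 2 - 8 * k ^ 2 + 1 ≠ x ^ 2 := by
  intro h
  have hcop := isCoprime_fundSol_pow k (2 * m)
  rw [pow_mul'] at h hcop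
  set a := fundSol k ^ m
  have hfac := mul_sq_eq_of_two_mul_y_sq_sub_eq_sq (a ^ 2) h
  rw [x_sq_add_eq] at hfac hcop
  have hsq : (1 + 4 * a.y ^ 2) * ((a ^ 2).x - 8 * k ^ 2) = x ^ 2 :=
    mul_left_cancel₀ (show (8 * k ^ 2 + 1 : ℤ) ≠ 0 by positivity) (by rw [hfac]; ring)
  obtain ⟨r, hr⟩ := Int.eq_sq_of_isCoprime_of_pos
    (hcop.of_isCoprime_of_dvd_right (dvd_mul_left _ _)).symm hsq (by positivity)
  have hy : a.y = 0 := by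
    have := Int.two_mul_abs_add_one_le_of_sq_eq_sq_add one_pos
      (show r ^ 2 = (2 * a.y) ^ 2 + 1 by linear_combination -hr)
    simpa using abs_nonpos_iff.mp (show |2 * a.y| ≤ 0 by linarith)
  rw [pow_two a, Solution₁.y_mul, hy] at h
  nlinarith [sq_nonneg x, pow_pos (abs_pos.mpr hk) 2, sq_abs k]

theorem eq_zero_of_two_mul_y_sq_sub_eq_sq_of_odd (hk : 0 < k) {m : ℕ} {x : ℤ}
    (h : 2 * (fundSol k ^ (2 * m + 1)).y ^ 2 - 8 * k ^ 2 + 1 = x ^ 2) : m = 0 := by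
  have hcop := isCoprime_fundSol_pow k (2 * m + 1)
  rw [pow_succ (fundSol k), pow_mul' (fundSol k)] at h hcop
  set a := fundSol k ^ m
  have hfac := mul_sq_eq_of_two_mul_y_sq_sub_eq_sq (a ^ 2 * fundSol k) h
  rw [x_sq_mul_fundSol_sub_eq] at hfac hcop
  have hsq : ((a ^ 2 * fundSol k).x + 8 * k ^ 2)
      * (4 * (16 * k ^ 2 + 1) * a.y ^ 2 + 16 * k * a.x * a.y + 1) = x ^ 2 :=
    mul_left_cancel₀ (show (8 * k ^ 2 + 1 : ℤ) ≠ 0 by positivity) (by rw [hfac]; ring)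
  obtain ⟨r, hr⟩ := Int.eq_sq_of_isCoprime_of_pos
    (hcop.of_isCoprime_of_dvd_left (dvd_mul_left _ _)).symm hsq
    (by rw [x_sq_mul_fundSol_add_eq]; positivity)
  rw [x_sq_mul_fundSol_add_eq] at hr
  have hv := Int.two_mul_abs_add_one_le_of_sq_eq_sq_add (by positivity) hr.symm
  by_contra hm
  obtain ⟨m, rfl⟩ := Nat.exists_eq_succ_of_ne_zero hm
  have hx : 0 < a.x := Solution₁.x_pow_pos (by simp only [fundSol_x]; positivity) _
  have hy : 0 < a.y := Solution₁.y_pow_succ_pos (by simp only [fundSol_x]; positivity)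
    (by simp only [fundSol_y]; positivity) _
  nlinarith [le_abs_self (2 * (8 * k ^ 2 + 1) * a.y + 4 * k * a.x)]

end

/-- If for some `n` the integer `2 * (y n)^2 - 8k^2 + 1` is a perfect square, then `n = 1`,
and in that case `2 * (y 1)^2 - 8k^2 + 1 = 24k^2 + 1`. -/
theorem stmt_13 (k : ℤ) (hk : 0 < k) (n : ℕ)
    (h : ∃ x : ℤ, 2 * (zy k n).2 ^ 2 - 8 * k ^ 2 + 1 = x ^ 2) :
    n = 1 ∧ 2 * (zy k 1).2 ^ 2 - 8 * k ^ 2 + 1 = 24 * k ^ 2 + 1 := by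
  refine ⟨?_, by simp only [zy]; ring⟩
  obtain ⟨x, hx⟩ := h
  rw [zy_eq_fundSol_pow] at hx
  obtain ⟨m, rfl | rfl⟩ := n.even_or_odd'
  · exact absurd hx (two_mul_y_sq_sub_ne_sq_of_even hk.ne' m x)
  · rw [eq_zero_of_two_mul_y_sq_sub_eq_sq_of_odd hk hx]
end

section
/- Let k be a positive integer. If {8k², 8k²+1, c} is a D(-8k²)-triple of positive integers with c > 1, then there exist nonnegative integers s and t such that c = 2s² + 1 and t² − (16k²+2)s² = 1. -/
/-! Dividing `8k²(c - 1) = x²` by `(2k)²` forces `c - 1 = 2s²`; then the product condition for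
`8k² + 1` and `c` reads `w² = (8k² + 1)(2s² + 1) - 8k² = (16k² + 2)s² + 1`, so `t = |w|` works. -/

theorem Int.exists_sq_eq_of_sq_mul_eq_sq {k m x : ℤ} (hk : k ≠ 0) (h : k ^ 2 * m = x ^ 2) :
    ∃ y, m = y ^ 2 := by
  obtain ⟨y, rfl⟩ : k ∣ x := (Int.pow_dvd_pow_iff two_ne_zero).mp ⟨m, h.symm⟩
  exact ⟨y, mul_left_cancel₀ (pow_ne_zero 2 hk) (by rw [h, mul_pow])⟩

theorem Int.exists_eq_two_mul_sq_of_eight_mul_eq_sq {n x : ℤ} (h : 8 * n = x ^ 2) :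
    ∃ s, n = 2 * s ^ 2 := by
  obtain ⟨z, hz⟩ := Int.exists_sq_eq_of_sq_mul_eq_sq two_ne_zero (m := 2 * n) (by rw [← h]; ring)
  obtain ⟨s, rfl⟩ : (2 : ℤ) ∣ z := Int.Prime.dvd_pow' Nat.prime_two ⟨n, hz.symm⟩
  exact ⟨s, by linarith⟩

theorem stmt_14_general (k c : ℤ) (hk : 0 < k)
    (h1c : ∃ x : ℤ, 8 * k ^ 2 * c - 8 * k ^ 2 = x ^ 2)
    (h2c : ∃ x : ℤ, (8 * k ^ 2 + 1) * c - 8 * k ^ 2 = x ^ 2) :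
    ∃ s t : ℤ, 0 ≤ s ∧ 0 ≤ t ∧ c = 2 * s ^ 2 + 1 ∧
      t ^ 2 - (16 * k ^ 2 + 2) * s ^ 2 = 1 := by
  obtain ⟨x, hx⟩ := h1c
  obtain ⟨w, hw⟩ := h2c
  obtain ⟨y, hy⟩ := Int.exists_sq_eq_of_sq_mul_eq_sq hk.ne' (m := 8 * (c - 1)) (by rw [← hx]; ring)
  obtain ⟨s, hs⟩ := Int.exists_eq_two_mul_sq_of_eight_mul_eq_sq hy
  have hcs : c = 2 * s ^ 2 + 1 := by linarith
  refine ⟨|s|, |w|, abs_nonneg s, abs_nonneg w, by rwa [sq_abs], ?_⟩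
  rw [sq_abs, sq_abs, ← hw, hcs]
  ring

/-- If `{8k^2, 8k^2+1, c}` is a `D(-8k^2)`-triple of positive integers with `c > 1`, then
there exist nonnegative integers `s` and `t` with `c = 2s^2 + 1` and
`t^2 - (16k^2+2)s^2 = 1`. -/
theorem stmt_14 (k c : ℤ) (hk : 0 < k) (hc : 1 < c)
    (hc1 : c ≠ 8 * k ^ 2) (hc2 : c ≠ 8 * k ^ 2 + 1)
    (h12 : ∃ x : ℤ, 8 * k ^ 2 * (8 * k ^ 2 + 1) - 8 * k ^ 2 = x ^ 2)
    (h1c : ∃ x : ℤ, 8 * k ^ 2 * c - 8 * k ^ 2 = x ^ 2)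
    (h2c : ∃ x : ℤ, (8 * k ^ 2 + 1) * c - 8 * k ^ 2 = x ^ 2) :
    ∃ s t : ℤ, 0 ≤ s ∧ 0 ≤ t ∧ c = 2 * s ^ 2 + 1 ∧
      t ^ 2 - (16 * k ^ 2 + 2) * s ^ 2 = 1 :=
  stmt_14_general k c hk h1c h2c
end

section
/- Let k be a positive integer. The integer 24k² + 1 is a perfect square if and only if k is a term of the sequence (k_i) defined by k_1 = 1, k_2 = 10, k_{n+2} = 10·k_{n+1} − k_n. -/
/-!
`24k² + 1 = x²` is the Pell equation `x² - 24k² = 1`, whose fundamental solution is `5 + √24`.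
Every solution with `x > 0, k ≥ 0` is a power `(5 + √24)ⁿ`, and since `5 + √24` is a root of
`X² - 10X + 1`, the `√24`-coordinates of these powers satisfy the recurrence of `kseq`.
-/

/-- The sequence `k₁ = 1, k₂ = 10, k_(n+2) = 10 k_(n+1) - k_n`
(here indexed from 0, so `kseq 0 = k₁`). -/
def kseq : ℕ → ℤ
  | 0 => 1
  | 1 => 10
  | n + 2 => 10 * kseq (n + 1) - kseq n

namespace Pell.Solution₁

theorem y_pow_add_two {d : ℤ} (a : Solution₁ d) (n : ℕ) :
    (a ^ (n + 2)).y = 2 * a.x * (a ^ (n + 1)).y - (a ^ n).y := by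
  have hpell := a.prop
  rw [pow_succ' a (n + 1), pow_succ' a n]
  simp only [x_mul, y_mul]
  linear_combination (-(a ^ n).y) * hpell

end Pell.Solution₁

open Pell Solution₁

def pellFundamental24 : Solution₁ 24 := .mk 5 1 (by norm_num)

theorem isFundamental_pellFundamental24 : IsFundamental pellFundamental24 := by
  refine ⟨by decide, by decide, fun {b} hb => ?_⟩
  have hy : 0 < b.y ^ 2 := sq_pos_of_ne_zero (y_ne_zero_of_one_lt_x hb)
  change 5 ≤ b.x
  nlinarith [b.prop_x]

theorem kseq_eq_y_pow (n : ℕ) : kseq n = (pellFundamental24 ^ (n + 1)).y := by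
  induction n using Nat.twoStepInduction with
  | zero => rfl
  | one => rfl
  | more n ih₀ ih₁ =>
    rw [kseq, ih₀, ih₁, y_pow_add_two (n := n + 1), show pellFundamental24.x = 5 from rfl]
    ring

/-- For a positive integer `k`, the integer `24k^2 + 1` is a perfect square if and only if
`k` is a term of the sequence `k₁ = 1, k₂ = 10, k_(n+2) = 10 k_(n+1) - k_n`. -/
theorem stmt_16 (k : ℤ) (hk : 0 < k) :
    (∃ x : ℤ, 24 * k ^ 2 + 1 = x ^ 2) ↔ ∃ i : ℕ, k = kseq i := by
  constructor
  · rintro ⟨x, hx⟩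
    have hx₀ : 0 < |x| := abs_pos.2 (by rintro rfl; nlinarith)
    let b : Solution₁ 24 := .mk |x| k (by rw [sq_abs]; linarith)
    obtain ⟨n, hn⟩ := isFundamental_pellFundamental24.eq_pow_of_nonneg (a := b) hx₀ hk.le
    cases n with
    | zero => exact absurd (congrArg Solution₁.y (hn.trans (pow_zero _))) hk.ne'
    | succ m => exact ⟨m, by rw [kseq_eq_y_pow, ← hn]; rfl⟩
  · rintro ⟨i, rfl⟩
    exact ⟨(pellFundamental24 ^ (i + 1)).x, by rw [kseq_eq_y_pow, prop_x, add_comm]⟩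
end

section
/- Let k be a positive integer. If there exists a positive integer d such that {1, 2k², 2k²+2k+1, d} is a D(-k²)-quadruple, then 3 is a square modulo 2k+1, i.e., there exists an integer u with u² ≡ 3 (mod 2k+1). -/
/-!
With `m = 2k + 1` we have `2k² + 2k + 1 = (m² + 1) / 2`. Writing `d = x² + k²` and
`2k²d - k² = (kw)²`, the condition `(2k² + 2k + 1)d - k² = z²` becomes the Pell-type
equation `(2z)² - (m² + 1) w² = 2m`. Multiplying a solution `u + v√(m² + 1)` with `v > 0`
by the conjugate of the unit `(2m² + 1) + 2m√(m² + 1)` gives a solution with smaller `|v|`,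
still nonzero and congruent to `v` mod `m`, unless `u = mv + 1`; in that case
`v ∈ {1, 2m - 1}`. Hence `w² ≡ 1 (mod m)`.
As `w² = 2d - 1` and `m` is odd, `d ≡ 1 (mod m)`, and then
`(2x)² = 4d - (m - 1)² ≡ 3 (mod m)`.
-/

namespace PellDescent

variable {m u v : ℤ}

lemma mul_add_one_le_of_sq_eq (hm : 0 < m) (hu : 0 ≤ u)
    (h : u ^ 2 = (m ^ 2 + 1) * v ^ 2 + 2 * m) : m * v + 1 ≤ u := by
  nlinarith [sq_nonneg (u - m * v), sq_nonneg v]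

lemma dvd_sq_sub_one_of_eq_mul_add_one (h : u ^ 2 = (m ^ 2 + 1) * v ^ 2 + 2 * m)
    (hu : u = m * v + 1) : m ∣ v ^ 2 - 1 := by
  have hv : (v - 1) * (v - (2 * m - 1)) = 0 := by subst hu; linear_combination -h
  rcases mul_eq_zero.mp hv with hv | hv
  · rw [sub_eq_zero.mp hv]; simp
  · rw [sub_eq_zero.mp hv]; exact ⟨4 * m - 4, by ring⟩

lemma sq_ne_two_mul_of_odd (hm : Odd m) (u : ℤ) : u ^ 2 ≠ 2 * m := by
  obtain ⟨j, rfl⟩ := hm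
  rcases Int.even_or_odd' u with ⟨a, rfl | rfl⟩ <;> intro h
  · have : 4 * (a * a) = 2 * (2 * j + 1) := by linear_combination h
    omega
  · have : 4 * (a * a + a) + 1 = 2 * (2 * j + 1) := by linear_combination h
    omega

/-- `u' + v'√(m² + 1) = (u + v√(m² + 1)) ((2m² + 1) - 2m√(m² + 1))`. -/
lemma exists_smaller_sol (hm : 0 < m) (hmo : Odd m) (hu : 0 ≤ u) (hv : 0 < v)
    (h : u ^ 2 = (m ^ 2 + 1) * v ^ 2 + 2 * m) (hlt : m * v + 1 < u) :
    ∃ u' v' : ℤ,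
      u' ^ 2 = (m ^ 2 + 1) * v' ^ 2 + 2 * m ∧ v' ≠ 0 ∧ |v'| < v ∧ m ∣ v - v' := by
  set v' := (2 * m ^ 2 + 1) * v - 2 * m * u
  set u' := (2 * m ^ 2 + 1) * u - 2 * m * (m ^ 2 + 1) * v
  have h' : u' ^ 2 = (m ^ 2 + 1) * v' ^ 2 + 2 * m := by linear_combination h
  have hv_large : 2 * m ≤ v := by
    have : 4 * m * v + 4 ≤ v ^ 2 + 2 * m := by
      nlinarith [mul_nonneg (by linarith : (0 : ℤ) ≤ u - (m * v + 2))
        (by positivity : (0 : ℤ) ≤ u + m * v + 2)]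
    nlinarith
  have hmu : m * u < (m ^ 2 + 1) * v := by
    have hbig : 2 * m ^ 3 < (m ^ 2 + 1) * v ^ 2 := by
      nlinarith [mul_le_mul hv_large hv_large (by positivity) (by positivity)]
    have hsq : (m * u) ^ 2 < ((m ^ 2 + 1) * v) ^ 2 := by
      nlinarith [congrArg (m ^ 2 * ·) h]
    exact lt_of_pow_lt_pow_left₀ 2 (by positivity) hsq
  refine ⟨u', v', h', fun h0 => ?_, abs_lt.mpr ⟨by linarith, by nlinarith⟩,
    ⟨2 * u - 2 * m * v, by ring⟩⟩
  exact sq_ne_two_mul_of_odd hmo u' (by simpa [h0] using h')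

theorem dvd_sq_sub_one_of_sq_eq (hm : 0 < m) (hmo : Odd m) (hv : v ≠ 0)
    (h : u ^ 2 = (m ^ 2 + 1) * v ^ 2 + 2 * m) : m ∣ v ^ 2 - 1 := by
  induction hn : v.natAbs using Nat.strong_induction_on generalizing u v with
  | _ n ih =>
  rw [← sq_abs u, ← sq_abs v] at h
  rw [← sq_abs v]
  have hv_pos : 0 < |v| := abs_pos.mpr hv
  rcases (mul_add_one_le_of_sq_eq hm (abs_nonneg u) h).lt_or_eq with hlt | heq
  · obtain ⟨u', v', h', hv'0, hv'lt, hdvd⟩ :=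
      exists_smaller_sol hm hmo (abs_nonneg u) hv_pos h hlt
    have ih' : m ∣ v' ^ 2 - 1 := ih _ (by rw [← hn]; zify; exact hv'lt) hv'0 h' rfl
    have : |v| ^ 2 - 1 = (v' ^ 2 - 1) + (|v| - v') * (|v| + v') := by ring
    rw [this]
    exact dvd_add ih' (dvd_mul_of_dvd_left hdvd _)
  · exact dvd_sq_sub_one_of_eq_mul_add_one h heq.symm

end PellDescent

lemma exists_sq_eq_two_mul_sub_one {k d y : ℤ} (hk : k ≠ 0)
    (hy : 2 * k ^ 2 * d - k ^ 2 = y ^ 2) :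
    ∃ w : ℤ, w ^ 2 = 2 * d - 1 := by
  have hdvd : k ^ 2 ∣ y ^ 2 := ⟨2 * d - 1, by linear_combination -hy⟩
  obtain ⟨w, rfl⟩ := (Int.pow_dvd_pow_iff two_ne_zero).mp hdvd
  refine ⟨w, mul_left_cancel₀ (pow_ne_zero 2 hk) ?_⟩
  linear_combination -hy

/-- If there exists a positive integer `d` such that `{1, 2k^2, 2k^2+2k+1, d}` is a
`D(-k^2)`-quadruple, then `3` is a square modulo `2k+1`. -/
theorem stmt_18 (k : ℤ) (hk : 0 < k)
    (h : ∃ d : ℤ, 0 < d ∧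
      d ≠ 1 ∧ d ≠ 2 * k ^ 2 ∧ d ≠ 2 * k ^ 2 + 2 * k + 1 ∧
      (∃ x : ℤ, 1 * (2 * k ^ 2) - k ^ 2 = x ^ 2) ∧
      (∃ x : ℤ, 1 * (2 * k ^ 2 + 2 * k + 1) - k ^ 2 = x ^ 2) ∧
      (∃ x : ℤ, 2 * k ^ 2 * (2 * k ^ 2 + 2 * k + 1) - k ^ 2 = x ^ 2) ∧
      (∃ x : ℤ, 1 * d - k ^ 2 = x ^ 2) ∧
      (∃ x : ℤ, 2 * k ^ 2 * d - k ^ 2 = x ^ 2) ∧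
      (∃ x : ℤ, (2 * k ^ 2 + 2 * k + 1) * d - k ^ 2 = x ^ 2)) :
    ∃ u : ℤ, u ^ 2 ≡ 3 [ZMOD (2 * k + 1)] := by
  obtain ⟨d, -, -, -, -, -, -, -, ⟨x, hx⟩, ⟨y, hy⟩, ⟨z, hz⟩⟩ := h
  set m := 2 * k + 1 with hm
  have hmo : Odd m := ⟨k, rfl⟩
  obtain ⟨w, hw⟩ := exists_sq_eq_two_mul_sub_one hk.ne' hy
  have hw0 : w ≠ 0 := by rintro rfl; omega
  have hpell : (2 * z) ^ 2 = (m ^ 2 + 1) * w ^ 2 + 2 * m := by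
    rw [hm]; linear_combination -4 * hz - ((2 * k + 1) ^ 2 + 1) * hw
  have hdvd : m ∣ 2 * (d - 1) := by
    convert PellDescent.dvd_sq_sub_one_of_sq_eq (by omega) hmo hw0 hpell using 1
    linear_combination -hw
  have hd : m ∣ d - 1 := (Int.isCoprime_two_right.mpr hmo).dvd_of_dvd_mul_left hdvd
  refine ⟨2 * x, (Int.modEq_iff_dvd.mpr ?_).symm⟩
  have : (2 * x) ^ 2 - 3 = 4 * (d - 1) - m * (m - 2) := by linear_combination -4 * hx
  rw [this]
  exact dvd_sub (dvd_mul_of_dvd_right hd 4) (dvd_mul_right m _)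
end
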